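/- arXiv:0807.1753 — 2 statements merged into one kernel-verified Lean document; each statement's English description precedes it below -/
import Mathlib

section
/- Let n ≥ 2 and K be natural numbers with 1 ≤ K ≤ n, and let T : ℕ → ℝ satisfy T K = 0 and, for every l with 1 ≤ l < K, T l = 1 + (l/n)·(T l) + ((n−l)/n)·(T (l+1)). Then T 1 = ∑_{l=1}^{K−1} n/(n−l). -/
open Finset

/-- With `p = l / n`, this is `x - y = 1 / (1 - p)`: the mean of a geometric waiting time. -/
theorem sub_eq_div_of_eq_one_add_stay_add_advance {F : Type*} [Field F] {n l x y : F}
    (hn : n ≠ 0) (hnl : n - l ≠ 0) (h : x = 1 + l / n * x + (n - l) / n * y) :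
    x - y = n / (n - l) := by
  rw [eq_div_iff hnl]
  field_simp at h
  linear_combination h

theorem eq_sum_Ico_of_sub_succ_eq {M : Type*} [AddCommGroup M] {f a : ℕ → M} {m K : ℕ}
    (hmK : m ≤ K) (hK : f K = 0) (hstep : ∀ l ∈ Ico m K, f l - f (l + 1) = a l) :
    f m = ∑ l ∈ Ico m K, a l := by
  rw [← sum_congr rfl hstep, ← neg_inj, ← sum_neg_distrib]
  simp only [neg_sub]
  rw [sum_Ico_sub f hmK, hK, zero_sub]

theorem gathering_hitting_time_general (n K : ℕ) (hK1 : 1 ≤ K) (hKn : K ≤ n)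
    (T : ℕ → ℝ) (hTK : T K = 0)
    (hrec : ∀ l, 1 ≤ l → l < K →
      T l = 1 + ((l : ℝ) / n) * T l + (((n : ℝ) - l) / n) * T (l + 1)) :
    T 1 = ∑ l ∈ Finset.Icc 1 (K - 1), (n : ℝ) / ((n : ℝ) - l) := by
  rw [Icc_sub_one_right_eq_Ico_of_not_isMin (not_isMin_iff_ne_bot.2 (Nat.one_le_iff_ne_zero.1 hK1))]
  refine eq_sum_Ico_of_sub_succ_eq hK1 hTK fun l hl => ?_
  obtain ⟨hl1, hlK⟩ := mem_Ico.1 hl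
  have hln : (l : ℝ) < n := by exact_mod_cast hlK.trans_le hKn
  have hn : (0 : ℝ) < n := (Nat.cast_nonneg l).trans_lt hln
  exact sub_eq_div_of_eq_one_add_stay_add_advance hn.ne' (sub_ne_zero.2 hln.ne')
    (hrec l hl1 hlK)

/-- Expected hitting time of the gathering chain: when the maximal group has `l`
robots it grows to `l+1` with probability `(n-l)/n` and stays with probability `l/n`.
If `T K = 0` and `T l = 1 + (l/n)·T l + ((n-l)/n)·T (l+1)` for `1 ≤ l < K`,
then `T 1 = ∑_{l=1}^{K-1} n/(n-l)`. -/
theorem gathering_hitting_time (n K : ℕ) (hn : 2 ≤ n) (hK1 : 1 ≤ K) (hKn : K ≤ n)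
    (T : ℕ → ℝ) (hTK : T K = 0)
    (hrec : ∀ l, 1 ≤ l → l < K →
      T l = 1 + ((l : ℝ) / n) * T l + (((n : ℝ) - l) / n) * T (l + 1)) :
    T 1 = ∑ l ∈ Finset.Icc 1 (K - 1), (n : ℝ) / ((n : ℝ) - l) :=
  gathering_hitting_time_general n K hK1 hKn T hTK hrec
end

section
/- For every natural number m ≥ 2, one has ∑_{j=2}^{m} 1/(1 − (1/4)^{j}) ≤ m + 4/3. Consequently the expected convergence time of probabilistic scattering of m robots is O(m), and in a crash-prone system with n robots of which at most f crash, replacing m by n−f yields the bound (n−f) + 4/3. -/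
/-!
Each term is `1 / (1 - x ^ j) = 1 + x ^ j / (1 - x ^ j) ≤ 1 + x ^ j / (1 - x)`, so the sum exceeds
its number of terms `m - 1` by at most a geometric tail `x ^ 2 / (1 - x) ^ 2`, which is `1 / 9`
for `x = 1 / 4`.
-/

open Finset

section GeometricTail

variable {K : Type*} [Field K] [LinearOrder K] [IsStrictOrderedRing K] {x : K}

lemma one_div_one_sub_pow_le_one_add (hx0 : 0 ≤ x) (hx1 : x < 1) {j : ℕ} (hj : j ≠ 0) :
    1 / (1 - x ^ j) ≤ 1 + x ^ j / (1 - x) := by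
  have hx : 0 < 1 - x := sub_pos.2 hx1
  have hxj : 1 - x ≤ 1 - x ^ j := sub_le_sub_left (pow_le_of_le_one hx0 hx1.le hj) 1
  calc 1 / (1 - x ^ j) = 1 + x ^ j / (1 - x ^ j) := by
        field_simp [(hx.trans_le hxj).ne']
        ring
    _ ≤ 1 + x ^ j / (1 - x) := by gcongr

lemma sum_Icc_two_one_div_one_sub_pow_le (hx0 : 0 ≤ x) (hx1 : x < 1) (m : ℕ) :
    ∑ j ∈ Icc 2 m, 1 / (1 - x ^ j) ≤ ((m - 1 : ℕ) : K) + x ^ 2 / (1 - x) ^ 2 := by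
  have hx : 0 < 1 - x := sub_pos.2 hx1
  calc ∑ j ∈ Icc 2 m, 1 / (1 - x ^ j)
      ≤ ∑ j ∈ Icc 2 m, (1 + x ^ j / (1 - x)) :=
        sum_le_sum fun j hj => one_div_one_sub_pow_le_one_add hx0 hx1 (by grind)
    _ = ((m - 1 : ℕ) : K) + (∑ j ∈ Ico 2 (m + 1), x ^ j) / (1 - x) := by
        rw [sum_add_distrib, ← sum_div, Ico_add_one_right_eq_Icc]
        simp
    _ ≤ ((m - 1 : ℕ) : K) + x ^ 2 / (1 - x) / (1 - x) := by
        gcongr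
        exact geom_sum_Ico_le_of_lt_one hx0 hx1
    _ = ((m - 1 : ℕ) : K) + x ^ 2 / (1 - x) ^ 2 := by rw [div_div, sq (1 - x)]

end GeometricTail

/-- Expected scattering convergence time bound: `∑_{j=2}^{m} 1/(1 − (1/4)^j) ≤ m + 4/3`,
hence `O(m)`; replacing `m` by `n − f` yields the crash-prone bound `(n−f) + 4/3`. -/
theorem scattering_time_bound :
    (∀ m : ℕ, 2 ≤ m →
      ∑ j ∈ Finset.Icc 2 m, 1 / (1 - (1 / 4 : ℝ) ^ j) ≤ (m : ℝ) + 4 / 3) ∧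
    (∀ n f : ℕ, 2 ≤ n - f →
      ∑ j ∈ Finset.Icc 2 (n - f), 1 / (1 - (1 / 4 : ℝ) ^ j) ≤
        ((n - f : ℕ) : ℝ) + 4 / 3) := by
  have key (m : ℕ) : ∑ j ∈ Icc 2 m, 1 / (1 - (1 / 4 : ℝ) ^ j) ≤ (m : ℝ) + 4 / 3 := by
    have hm : ((m - 1 : ℕ) : ℝ) ≤ m := by exact_mod_cast Nat.sub_le m 1
    calc ∑ j ∈ Icc 2 m, 1 / (1 - (1 / 4 : ℝ) ^ j)
        ≤ ((m - 1 : ℕ) : ℝ) + (1 / 4) ^ 2 / (1 - 1 / 4) ^ 2 :=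
          sum_Icc_two_one_div_one_sub_pow_le (by norm_num) (by norm_num) m
      _ ≤ (m : ℝ) + 4 / 3 := by norm_num; linarith
  exact ⟨fun m _ => key m, fun n f _ => key (n - f)⟩
end
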